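/- Let γ : ℕ → [0,∞) and let p, C₂ be positive constants such that for every n ∈ ℕ the number of indices k with γ(k) ≤ n is at most C₂(1+n)^p. Then the double series Σ_{k,l ∈ ℕ} (2 + max{γ(k), γ(l)})^{-(2p+2)} converges, and its sum is at most C₂² Σ_{n=1}^∞ (n+1)^{-2}. -/

import Mathlib

/-!
Group the pairs `(k, l)` by the level `n = ⌊max (γ k) (γ l)⌋₊`. Both indices of a pair at level `n`
satisfy `γ ≤ n + 1`, so by the counting hypothesis there are at most `C₂² (n + 2)^{2p}` such pairs,
each contributing at most `(n + 2)^{-(2p+2)}`. Level `n` thus contributes at most `C₂² (n + 2)^{-2}`,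
which is summable in `n`.
-/

open Finset

lemma summable_inv_add_two_sq : Summable fun n : ℕ => (((n : ℝ) + 2) ^ 2)⁻¹ := by
  refine ((summable_nat_add_iff 2).mpr (Real.summable_nat_pow_inv.mpr one_lt_two)).congr ?_
  intro n
  push_cast
  rfl

lemma sum_le_tsum_of_sum_fiber_le {ι : Type*} {f : ι → ℝ} {b : ℕ → ℝ} (F : ι → ℕ)
    (hb0 : ∀ n, 0 ≤ b n) (hb : Summable b)
    (hfiber : ∀ (u : Finset ι) (n : ℕ), ∑ x ∈ u with F x = n, f x ≤ b n) (u : Finset ι) :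
    ∑ x ∈ u, f x ≤ ∑' n, b n := by
  rw [← sum_fiberwise_of_maps_to fun x hx => mem_image_of_mem F hx]
  calc ∑ n ∈ u.image F, ∑ x ∈ u with F x = n, f x
      ≤ ∑ n ∈ u.image F, b n := sum_le_sum fun n _ => hfiber u n
    _ ≤ ∑' n, b n := hb.sum_le_tsum _ fun n _ => hb0 n

lemma summable_and_tsum_le_of_sum_fiber_le {ι : Type*} {f : ι → ℝ} {b : ℕ → ℝ} (F : ι → ℕ)
    (hf0 : ∀ x, 0 ≤ f x) (hb0 : ∀ n, 0 ≤ b n) (hb : Summable b)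
    (hfiber : ∀ (u : Finset ι) (n : ℕ), ∑ x ∈ u with F x = n, f x ≤ b n) :
    Summable f ∧ ∑' x, f x ≤ ∑' n, b n :=
  have hsum := sum_le_tsum_of_sum_fiber_le F hb0 hb hfiber
  have hf := summable_of_sum_le (fun x => hf0 x) hsum
  ⟨hf, hf.tsum_le_of_sum_le hsum⟩

lemma card_filter_floor_max_eq_le_sq {α : Type*} {γ : α → ℝ} (n : ℕ)
    (hfin : {k | γ k ≤ n + 1}.Finite) (u : Finset (α × α)) :
    #{kl ∈ u | ⌊max (γ kl.1) (γ kl.2)⌋₊ = n} ≤ {k | γ k ≤ n + 1}.ncard ^ 2 := by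
  rw [Set.ncard_eq_toFinset_card _ hfin, sq, ← card_product]
  refine card_le_card fun kl hkl => ?_
  obtain ⟨-, hlevel⟩ := mem_filter.mp hkl
  have hlt : max (γ kl.1) (γ kl.2) < n + 1 := hlevel ▸ Nat.lt_floor_add_one _
  simp only [mem_product, Set.Finite.mem_toFinset, Set.mem_ofPred_eq]
  exact ⟨(le_max_left _ _).trans hlt.le, (le_max_right _ _).trans hlt.le⟩

lemma mul_rpow_sq_mul_rpow_neg {x : ℝ} (hx : 0 < x) (C p : ℝ) :
    (C * x ^ p) ^ 2 * x ^ (-(2 * p + 2)) = C ^ 2 * (x ^ 2)⁻¹ := by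
  rw [mul_pow, ← Real.rpow_natCast (x ^ p), ← Real.rpow_mul hx.le, mul_assoc,
    ← Real.rpow_add hx, ← Real.rpow_natCast x 2, ← Real.rpow_neg hx.le]
  congr 2
  push_cast
  ring

lemma sum_filter_floor_max_eq_le {α : Type*} {γ : α → ℝ} (hγ : ∀ k, 0 ≤ γ k) {p C : ℝ}
    (hp : 0 ≤ p) (n : ℕ) (hfin : {k | γ k ≤ n + 1}.Finite)
    (hcard : ({k | γ k ≤ n + 1}.ncard : ℝ) ≤ C * (n + 2) ^ p) (u : Finset (α × α)) :
    ∑ kl ∈ u with ⌊max (γ kl.1) (γ kl.2)⌋₊ = n, (2 + max (γ kl.1) (γ kl.2)) ^ (-(2 * p + 2)) ≤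
      C ^ 2 * (((n : ℝ) + 2) ^ 2)⁻¹ := by
  have hterm : ∀ kl ∈ u.filter fun kl => ⌊max (γ kl.1) (γ kl.2)⌋₊ = n,
      (2 + max (γ kl.1) (γ kl.2)) ^ (-(2 * p + 2)) ≤ ((n : ℝ) + 2) ^ (-(2 * p + 2)) := by
    intro kl hkl
    have hmax : 0 ≤ max (γ kl.1) (γ kl.2) := (hγ _).trans (le_max_left _ _)
    have hn : (n : ℝ) ≤ max (γ kl.1) (γ kl.2) := (mem_filter.mp hkl).2 ▸ Nat.floor_le hmax
    exact Real.rpow_le_rpow_of_nonpos (by positivity) (by linarith) (by linarith)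
  have hcount : (#{kl ∈ u | ⌊max (γ kl.1) (γ kl.2)⌋₊ = n} : ℝ) ≤ (C * (n + 2) ^ p) ^ 2 :=
    calc (#{kl ∈ u | ⌊max (γ kl.1) (γ kl.2)⌋₊ = n} : ℝ)
        ≤ ({k | γ k ≤ n + 1}.ncard : ℝ) ^ 2 := by
          exact_mod_cast card_filter_floor_max_eq_le_sq n hfin u
      _ ≤ (C * (n + 2) ^ p) ^ 2 := by gcongr
  calc _ ≤ ∑ kl ∈ u with ⌊max (γ kl.1) (γ kl.2)⌋₊ = n, ((n : ℝ) + 2) ^ (-(2 * p + 2)) :=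
        sum_le_sum hterm
    _ = #{kl ∈ u | ⌊max (γ kl.1) (γ kl.2)⌋₊ = n} * ((n : ℝ) + 2) ^ (-(2 * p + 2)) := by
        rw [sum_const, nsmul_eq_mul]
    _ ≤ (C * (n + 2) ^ p) ^ 2 * ((n : ℝ) + 2) ^ (-(2 * p + 2)) := by gcongr
    _ = C ^ 2 * (((n : ℝ) + 2) ^ 2)⁻¹ := mul_rpow_sq_mul_rpow_neg (by positivity) C p

theorem stmt5_general (γ : ℕ → ℝ) (hγ : ∀ k, 0 ≤ γ k)
    (p C₂ : ℝ) (hp : 0 < p)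
    (hcount : ∀ n : ℕ, {k : ℕ | γ k ≤ (n : ℝ)}.Finite ∧
      (({k : ℕ | γ k ≤ (n : ℝ)}.ncard : ℝ) ≤ C₂ * (1 + (n : ℝ)) ^ p)) :
    Summable (fun kl : ℕ × ℕ => (2 + max (γ kl.1) (γ kl.2)) ^ (-(2 * p + 2))) ∧
    (∑' kl : ℕ × ℕ, (2 + max (γ kl.1) (γ kl.2)) ^ (-(2 * p + 2))) ≤
      C₂ ^ 2 * ∑' n : ℕ, (((n : ℝ) + 2) ^ 2)⁻¹ := by
  have hfiber (u : Finset (ℕ × ℕ)) (n : ℕ) := by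
    obtain ⟨hfin, hcard⟩ := hcount (n + 1)
    push_cast at hfin hcard
    rw [show 1 + ((n : ℝ) + 1) = n + 2 by ring] at hcard
    exact sum_filter_floor_max_eq_le hγ hp.le n hfin hcard u
  rw [← tsum_mul_left]
  refine summable_and_tsum_le_of_sum_fiber_le _ (fun kl => ?_) (fun n => by positivity)
    (summable_inv_add_two_sq.mul_left _) hfiber
  exact Real.rpow_nonneg (by linarith [hγ kl.1, le_max_left (γ kl.1) (γ kl.2)]) _

/-- Let `γ : ℕ → [0,∞)` and `p, C₂ > 0` be such that
`#{k : γ(k) ≤ n} ≤ C₂(1+n)^p` for every `n ∈ ℕ`. Then the double series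
`Σ_{k,l} (2 + max{γ(k),γ(l)})^{-(2p+2)}` converges and its sum is at most
`C₂² Σ_{n=1}^∞ (n+1)^{-2}`. -/
theorem stmt5 (γ : ℕ → ℝ) (hγ : ∀ k, 0 ≤ γ k)
    (p C₂ : ℝ) (hp : 0 < p) (hC₂ : 0 < C₂)
    (hcount : ∀ n : ℕ, {k : ℕ | γ k ≤ (n : ℝ)}.Finite ∧
      (({k : ℕ | γ k ≤ (n : ℝ)}.ncard : ℝ) ≤ C₂ * (1 + (n : ℝ)) ^ p)) :
    Summable (fun kl : ℕ × ℕ => (2 + max (γ kl.1) (γ kl.2)) ^ (-(2 * p + 2))) ∧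
    (∑' kl : ℕ × ℕ, (2 + max (γ kl.1) (γ kl.2)) ^ (-(2 * p + 2))) ≤
      C₂ ^ 2 * ∑' n : ℕ, (((n : ℝ) + 2) ^ 2)⁻¹ :=
  stmt5_general γ hγ p C₂ hp hcount
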